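/- arXiv:1109.5310 — 2 statements merged into one kernel-verified Lean document; each statement's English description precedes it below -/
import Mathlib

section
/- Fix 0 < α ≤ 1, K > 0, N, M positive integers. The set D(N,M,K) of f ∈ C[0,1] such that ℋ^{1−α+1/N}_∞({x : f(x) = g(x)}) < 1/M for every g : [0,1] → ℝ that is Hölder continuous of exponent α with constant K, contains a dense open subset of C[0,1]. -/
open MeasureTheory Set ENNReal

noncomputable section

/-- The unit interval, as a subset of `ℝ`. -/
abbrev I01 : Set ℝ := Set.Icc (0 : ℝ) 1

/-- The `d`-dimensional Hausdorff content (capacity) of a set of reals. -/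
def hContent (d : ℝ) (H : Set ℝ) : ℝ≥0∞ :=
  ⨅ (t : ℕ → Set ℝ) (_ : H ⊆ ⋃ i, t i) (_ : ∀ i, ∃ a b : ℝ, t i = Set.Icc a b),
    ∑' i, ⨆ (_ : (t i).Nonempty), EMetric.diam (t i) ^ d

/-!
Cut `[0, 1]` into `n` pieces of length `1/n` and fix a scale `r` with `n r^d < 1/M`. If on each
piece `|f x - f y| > K |x - y|^α` whenever `|x - y| ≥ r`, then the coincidence set of `f` with a
`K`-Hölder `g` meets each piece in a set of diameter `< r`, so `n` intervals of length `r` cover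
it. By compactness this condition is open in `f`. It is also dense: adding to a polynomial a small
zigzag with `n` teeth makes the slope on each piece of order `n`, and since `d > 1 - α` one can
choose `n` large and `r = (2Mn)^(-1/d)` so that this slope beats both the Lipschitz constant of
the polynomial and the Hölder quotient `K r^(α-1)`.
-/

theorem hContent_le_of_subset_biUnion {d r : ℝ} {n : ℕ} {S : Set ℝ} {s : ℕ → Set ℝ}
    (hS : S ⊆ ⋃ p < n, s p) (hs : ∀ p < n, ∀ x ∈ s p, ∀ y ∈ s p, |x - y| ≤ r) :
    hContent d S ≤ n * ENNReal.ofReal r ^ d := by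
  let t : ℕ → Set ℝ := fun p => if p < n then Icc (sInf (s p)) (sInf (s p) + r) else Icc 1 0
  have hst : ∀ p < n, s p ⊆ t p := by
    intro p hp x hx
    have hx_le : ∀ y ∈ s p, x - r ≤ y := fun y hy => by
      linarith [(abs_le.1 (hs p hp x hx y hy)).2]
    simp only [t, if_pos hp]
    exact ⟨csInf_le ⟨x - r, hx_le⟩ hx, by linarith [le_csInf ⟨x, hx⟩ hx_le]⟩
  have hcover : S ⊆ ⋃ p, t p := hS.trans <| iUnion_mono fun p => iUnion_subset (hst p)
  have hIcc : ∀ p, ∃ a b : ℝ, t p = Icc a b := fun p => by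
    by_cases hp : p < n <;> simp only [t, hp, if_true, if_false] <;> exact ⟨_, _, rfl⟩
  have hterm : ∀ p, ⨆ (_ : (t p).Nonempty), Metric.ediam (t p) ^ d ≤
      if p < n then ENNReal.ofReal r ^ d else 0 := by
    intro p
    by_cases hp : p < n <;> simp [t, hp]
  calc hContent d S ≤ ∑' p, ⨆ (_ : (t p).Nonempty), Metric.ediam (t p) ^ d :=
        iInf_le_of_le t (iInf_le_of_le hcover (iInf_le_of_le hIcc le_rfl))
    _ ≤ ∑' p, if p < n then ENNReal.ofReal r ^ d else 0 := ENNReal.tsum_le_tsum hterm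
    _ = n * ENNReal.ofReal r ^ d := by
        rw [tsum_eq_sum (s := Finset.range n) fun p hp => if_neg (by simpa using hp)]
        rw [Finset.sum_ite_of_true fun p hp => Finset.mem_range.1 hp]
        simp

theorem ContinuousMap.isOpen_setOf_forall_lt_abs_sub {X : Type*} [TopologicalSpace X]
    [LocallyCompactSpace X] {A : Set (X × X)} (hA : IsCompact A) {h : X × X → ℝ}
    (hh : ∀ z ∈ A, ContinuousAt h z) :
    IsOpen {f : C(X, ℝ) | ∀ z ∈ A, h z < |f z.1 - f z.2|} := by
  refine isOpen_iff_eventually.2 fun f hf => hA.eventually_forall_of_forall_eventually ?_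
  intro z hz
  have hcont : ContinuousAt (fun q : C(X, ℝ) × (X × X) => |q.1 q.2.1 - q.1 q.2.2| - h q.2)
      (f, z) := by
    have := hh z hz
    fun_prop
  filter_upwards [hcont.eventually (lt_mem_nhds (sub_pos.2 (hf z hz)))] with q hq
  exact sub_pos.1 hq

def piece (n p : ℕ) : Set ℝ := Icc (p / n) ((p + 1) / n)

theorem exists_lt_mem_piece {n : ℕ} (hn : 0 < n) {x : ℝ} (hx : x ∈ I01) :
    ∃ p < n, x ∈ piece n p := by
  have hn' : (0 : ℝ) < n := by exact_mod_cast hn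
  have hxn : 0 ≤ x * n := mul_nonneg hx.1 hn'.le
  rcases hx.2.lt_or_eq with hx1 | rfl
  · refine ⟨⌊x * n⌋₊, (Nat.floor_lt hxn).2 (mul_lt_of_lt_one_left hn' hx1),
      (div_le_iff₀ hn').2 (Nat.floor_le hxn), (le_div_iff₀ hn').2 (Nat.lt_floor_add_one _).le⟩
  · refine ⟨n - 1, Nat.sub_lt hn one_pos, ?_⟩
    rw [piece, Nat.cast_pred hn, sub_add_cancel, div_self hn'.ne']
    exact ⟨div_le_one_of_le₀ (by linarith) hn'.le, le_rfl⟩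

def pieceGap (n : ℕ) (r : ℝ) : Set (I01 × I01) :=
  ⋃ p < n, {z | (z.1 : ℝ) ∈ piece n p ∧ (z.2 : ℝ) ∈ piece n p ∧ r ≤ |(z.1 : ℝ) - z.2|}

theorem isCompact_pieceGap (n : ℕ) (r : ℝ) : IsCompact (pieceGap n r) := by
  refine IsClosed.isCompact <| (Set.finite_lt_nat n).isClosed_biUnion fun p _ => ?_
  have hdist : Continuous fun z : I01 × I01 => |(z.1 : ℝ) - z.2| := by fun_prop
  exact (isClosed_Icc.preimage (by fun_prop)).inter
    ((isClosed_Icc.preimage (by fun_prop)).inter (isClosed_le continuous_const hdist))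

def pieceSteep (K α : ℝ) (n : ℕ) (r : ℝ) : Set C(I01, ℝ) :=
  {f | ∀ z ∈ pieceGap n r, K * |(z.1 : ℝ) - z.2| ^ α < |f z.1 - f z.2|}

theorem isOpen_pieceSteep (K α : ℝ) (n : ℕ) {r : ℝ} (hr : 0 < r) :
    IsOpen (pieceSteep K α n r) := by
  refine ContinuousMap.isOpen_setOf_forall_lt_abs_sub (isCompact_pieceGap n r) fun z hz => ?_
  obtain ⟨p, -, -, -, hzr⟩ := mem_iUnion₂.1 hz
  have hz0 : |(z.1 : ℝ) - z.2| ≠ 0 := (hr.trans_le hzr).ne'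
  have hdist : ContinuousAt (fun z : I01 × I01 => |(z.1 : ℝ) - z.2|) z := by fun_prop
  exact continuousAt_const.mul (hdist.rpow_const (Or.inl hz0))

def steepSet (K α d : ℝ) (M : ℕ) : Set C(I01, ℝ) :=
  ⋃ (n : ℕ) (_ : 0 < n) (r : ℝ) (_ : 0 < r) (_ : n * r ^ d < (1 / M : ℝ)), pieceSteep K α n r

theorem isOpen_steepSet (K α d : ℝ) (M : ℕ) : IsOpen (steepSet K α d M) :=
  isOpen_iUnion fun _ => isOpen_iUnion fun _ => isOpen_iUnion fun _ => isOpen_iUnion fun hr =>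
    isOpen_iUnion fun _ => isOpen_pieceSteep K α _ hr

theorem hContent_coincidence_lt_of_mem_steepSet {K α d : ℝ} {M : ℕ} (hM : 0 < M) {f : C(I01, ℝ)}
    (hf : f ∈ steepSet K α d M) {g : I01 → ℝ}
    (hg : ∀ x y : I01, |g x - g y| ≤ K * |x.1 - y.1| ^ α) :
    hContent d (Subtype.val '' {x : I01 | f x = g x}) < 1 / M := by
  simp only [steepSet, mem_iUnion] at hf
  obtain ⟨n, hn, r, hr, hnr, hsteep⟩ := hf
  set S := Subtype.val '' {x : I01 | f x = g x}
  have hS : S ⊆ ⋃ p < n, S ∩ piece n p := by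
    rintro _ ⟨x, hx, rfl⟩
    obtain ⟨p, hp, hxp⟩ := exists_lt_mem_piece hn x.2
    exact mem_iUnion₂.2 ⟨p, hp, ⟨x, hx, rfl⟩, hxp⟩
  have hclose : ∀ p < n, ∀ x ∈ S ∩ piece n p, ∀ y ∈ S ∩ piece n p, |x - y| ≤ r := by
    rintro p hp _ ⟨⟨x, hfgx, rfl⟩, hx⟩ _ ⟨⟨y, hfgy, rfl⟩, hy⟩
    by_contra! hxy
    have hlt := hsteep (x, y) (mem_iUnion₂.2 ⟨p, hp, hx, hy, hxy.le⟩)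
    rw [show f x = g x from hfgx, show f y = g y from hfgy] at hlt
    linarith [hg x y]
  calc hContent d S ≤ n * ENNReal.ofReal r ^ d := hContent_le_of_subset_biUnion hS hclose
    _ = ENNReal.ofReal (n * r ^ d) := by
        rw [ENNReal.ofReal_mul (Nat.cast_nonneg n), ENNReal.ofReal_natCast,
          ENNReal.ofReal_rpow_of_pos hr]
    _ < ENNReal.ofReal (1 / M) := (ENNReal.ofReal_lt_ofReal_iff (by positivity)).2 hnr
    _ = 1 / M := by simp [hM]

open Real

/-- The distance from `u` to `2ℤ`: a zigzag with slopes `±1` and values in `[0, 1]`. -/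
def tent (u : ℝ) : ℝ := arccos (cos (π * u)) / π

@[fun_prop]
theorem continuous_tent : Continuous tent := by
  unfold tent
  fun_prop

theorem tent_nonneg (u : ℝ) : 0 ≤ tent u :=
  div_nonneg (arccos_nonneg _) pi_pos.le

theorem tent_le_one (u : ℝ) : tent u ≤ 1 :=
  (div_le_one pi_pos).2 (arccos_le_pi _)

theorem tent_of_mem_Icc_even (k : ℤ) {u : ℝ} (hu : u ∈ Icc (2 * k : ℝ) (2 * k + 1)) :
    tent u = u - 2 * k := by
  have hπ := pi_pos
  have hshift : π * u = π * (u - 2 * k) + k * (2 * π) := by ring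
  rw [tent, hshift, cos_add_int_mul_two_pi,
    arccos_cos (by nlinarith [hu.1]) (by nlinarith [hu.2])]
  field_simp

theorem tent_of_mem_Icc_odd (k : ℤ) {u : ℝ} (hu : u ∈ Icc (2 * k + 1 : ℝ) (2 * k + 2)) :
    tent u = 2 * k + 2 - u := by
  have hπ := pi_pos
  have hshift : π * u = -(π * (2 * k + 2 - u)) + ((k + 1 : ℤ) : ℝ) * (2 * π) := by
    push_cast; ring
  rw [tent, hshift, cos_add_int_mul_two_pi, cos_neg,
    arccos_cos (by nlinarith [hu.2]) (by nlinarith [hu.1])]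
  field_simp

theorem abs_tent_sub_tent {p : ℤ} {u v : ℝ} (hu : u ∈ Icc (p : ℝ) (p + 1))
    (hv : v ∈ Icc (p : ℝ) (p + 1)) : |tent u - tent v| = |u - v| := by
  rcases Int.even_or_odd' p with ⟨k, rfl | rfl⟩
  · push_cast at hu hv
    rw [tent_of_mem_Icc_even k hu, tent_of_mem_Icc_even k hv, sub_sub_sub_cancel_right]
  · push_cast at hu hv
    rw [tent_of_mem_Icc_odd k ⟨hu.1, by linarith [hu.2]⟩,
      tent_of_mem_Icc_odd k ⟨hv.1, by linarith [hv.2]⟩, abs_sub_comm u v]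
    congr 1
    ring

theorem abs_tent_mul_sub_tent_mul {n p : ℕ} (hn : 0 < n) {x y : ℝ} (hx : x ∈ piece n p)
    (hy : y ∈ piece n p) : |tent (n * x) - tent (n * y)| = n * |x - y| := by
  have hn' : (0 : ℝ) < n := by exact_mod_cast hn
  have hscale : ∀ {z}, z ∈ piece n p → n * z ∈ Icc ((p : ℤ) : ℝ) ((p : ℤ) + 1) := fun hz => by
    obtain ⟨h₁, h₂⟩ := hz
    rw [div_le_iff₀ hn'] at h₁
    rw [le_div_iff₀ hn'] at h₂
    push_cast
    constructor <;> linarith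
  rw [abs_tent_sub_tent (hscale hx) (hscale hy), ← mul_sub, abs_mul, Nat.abs_cast]

theorem rpow_le_rpow_sub_one_mul {α r t : ℝ} (hr : 0 < r) (hrt : r ≤ t) (hα : α ≤ 1) :
    t ^ α ≤ r ^ (α - 1) * t := by
  have ht : 0 < t := hr.trans_le hrt
  calc t ^ α = t ^ (α - 1) * t := by rw [Real.rpow_sub_one ht.ne', div_mul_cancel₀ _ ht.ne']
    _ ≤ r ^ (α - 1) * t :=
        mul_le_mul_of_nonneg_right (Real.rpow_le_rpow_of_nonpos hr hrt (by linarith)) ht.le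

open Filter Topology in
theorem exists_piece_scale {α d ε : ℝ} (hd : 0 < d) (hdα : 1 - α < d) (hε : 0 < ε) {M : ℕ}
    (hM : 0 < M) (L K : ℝ) :
    ∃ n : ℕ, 0 < n ∧ ∃ r : ℝ, 0 < r ∧ n * r ^ d < (1 / M : ℝ) ∧ L + K * r ^ (α - 1) < ε * n := by
  -- `r = (2Mn)^(-1/d)` gives `n r^d = 1/(2M)`, and `r^(α-1) = (2Mn)^β` is `o(n)` as `β < 1`.
  set β := (1 - α) / d
  have hβ : 0 < -(β - 1) := by rw [neg_pos, sub_neg, div_lt_one hd]; exact hdα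
  have hlim : Tendsto (fun n : ℕ => L * (n : ℝ)⁻¹ + K * (2 * M) ^ β * (n : ℝ) ^ (β - 1))
      atTop (𝓝 0) := by
    have h₁ := tendsto_inv_atTop_zero.comp (tendsto_natCast_atTop_atTop (R := ℝ))
    have h₂ := (tendsto_rpow_neg_atTop hβ).comp (tendsto_natCast_atTop_atTop (R := ℝ))
    simpa using (h₁.const_mul L).add (h₂.const_mul (K * (2 * M) ^ β))
  obtain ⟨n, hsmall, hn⟩ := ((hlim.eventually (gt_mem_nhds hε)).and (eventually_gt_atTop 0)).exists
  have hn' : (0 : ℝ) < n := by exact_mod_cast hn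
  have hM' : (0 : ℝ) < M := by exact_mod_cast hM
  have hc : (0 : ℝ) < 2 * M * n := by positivity
  refine ⟨n, hn, (2 * M * n) ^ (-1 / d), by positivity, ?_, ?_⟩
  · rw [← Real.rpow_mul hc.le, div_mul_cancel₀ _ hd.ne', Real.rpow_neg_one]
    calc (n : ℝ) * (2 * M * n : ℝ)⁻¹ = 1 / (2 * M) := by field_simp
      _ < 1 / M := by gcongr; linarith
  · have hpow : ((2 * M * n : ℝ) ^ (-1 / d)) ^ (α - 1) = (2 * M) ^ β * n ^ β := by
      rw [← Real.rpow_mul hc.le, ← Real.mul_rpow (by positivity) hn'.le]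
      congr 1
      simp only [β]
      field_simp
      ring
    calc L + K * ((2 * M * n : ℝ) ^ (-1 / d)) ^ (α - 1)
        = (L * (n : ℝ)⁻¹ + K * (2 * M) ^ β * (n : ℝ) ^ (β - 1)) * n := by
          rw [hpow, add_mul, Real.rpow_sub_one hn'.ne']
          field_simp
      _ < ε * n := by gcongr

def zigzag (n : ℕ) (a : ℝ) : C(I01, ℝ) := ⟨fun x => a * tent (n * x), by fun_prop⟩

theorem norm_zigzag_le (n : ℕ) {a : ℝ} (ha : 0 ≤ a) : ‖zigzag n a‖ ≤ a := by
  refine (ContinuousMap.norm_le _ ha).2 fun x => ?_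
  rw [zigzag, ContinuousMap.coe_mk, Real.norm_eq_abs, abs_mul, abs_of_nonneg ha,
    abs_of_nonneg (tent_nonneg _)]
  exact mul_le_of_le_one_right ha (tent_le_one _)

theorem abs_zigzag_sub_zigzag {n p : ℕ} (hn : 0 < n) {a : ℝ} (ha : 0 ≤ a) {x y : I01}
    (hx : (x : ℝ) ∈ piece n p) (hy : (y : ℝ) ∈ piece n p) :
    |zigzag n a x - zigzag n a y| = a * n * |(x : ℝ) - y| := by
  rw [zigzag, ContinuousMap.coe_mk, ← mul_sub, abs_mul, abs_of_nonneg ha,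
    abs_tent_mul_sub_tent_mul hn hx hy, mul_assoc]

theorem add_zigzag_mem_pieceSteep {K α a r Λ : ℝ} {n : ℕ} (hK : 0 ≤ K) (hα : α ≤ 1)
    (ha : 0 ≤ a) (hn : 0 < n) (hr : 0 < r) (hslope : Λ + K * r ^ (α - 1) < a * n)
    {g : C(I01, ℝ)} (hg : ∀ x y : I01, |g x - g y| ≤ Λ * |(x : ℝ) - y|) :
    g + zigzag n a ∈ pieceSteep K α n r := by
  rintro ⟨x, y⟩ hxy
  obtain ⟨p, -, hx, hy, hrxy⟩ := mem_iUnion₂.1 hxy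
  have hdist : 0 < |(x : ℝ) - y| := hr.trans_le hrxy
  have htriangle : |zigzag n a x - zigzag n a y| ≤
      |(g + zigzag n a) x - (g + zigzag n a) y| + |g x - g y| := by
    refine le_of_eq_of_le (congrArg abs ?_) (abs_sub _ _)
    simp only [ContinuousMap.add_apply]
    ring
  calc K * |(x : ℝ) - y| ^ α ≤ K * (r ^ (α - 1) * |(x : ℝ) - y|) :=
        mul_le_mul_of_nonneg_left (rpow_le_rpow_sub_one_mul hr hrxy hα) hK
    _ < (a * n - Λ) * |(x : ℝ) - y| := by nlinarith
    _ ≤ _ := by linarith [abs_zigzag_sub_zigzag hn ha hx hy, hg x y]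

theorem Polynomial.exists_lipschitzOnWith (P : Polynomial ℝ) {s : Set ℝ} (hs : IsCompact s) :
    ∃ Λ, LipschitzOnWith Λ P.eval s := by
  have hP : ContDiff ℝ 1 P.eval := by simpa using P.contDiff_aeval (𝕜 := ℝ) 1
  exact hP.locallyLipschitz.locallyLipschitzOn.exists_lipschitzOnWith_of_compact hs

theorem dense_steepSet {K α d : ℝ} (hK : 0 ≤ K) (hα : α ≤ 1) (hdα : 1 - α < d) {M : ℕ}
    (hM : 0 < M) : Dense (steepSet K α d M) := by
  refine Metric.dense_iff.2 fun F η hη => ?_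
  obtain ⟨P, hPF⟩ := exists_polynomial_near_continuousMap 0 1 F (η / 2) (half_pos hη)
  obtain ⟨Λ, hΛ⟩ := P.exists_lipschitzOnWith isCompact_Icc
  have hPlip : ∀ x y : I01, |P.eval (x : ℝ) - P.eval (y : ℝ)| ≤ Λ * |(x : ℝ) - y| := by
    simpa [← Real.dist_eq] using fun x y : I01 => hΛ.dist_le_mul x x.2 y y.2
  obtain ⟨n, hn, r, hr, hnr, hslope⟩ :=
    exists_piece_scale (by linarith) hdα (half_pos hη) hM Λ K
  refine ⟨P.toContinuousMapOn I01 + zigzag n (η / 2), ?_, ?_⟩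
  · rw [Metric.mem_ball, dist_eq_norm, add_sub_right_comm]
    linarith [norm_add_le (P.toContinuousMapOn I01 - F) (zigzag n (η / 2)),
      norm_zigzag_le n (half_pos hη).le]
  · simp only [steepSet, mem_iUnion]
    exact ⟨n, hn, r, hr, hnr, add_zigzag_mem_pieceSteep hK hα (half_pos hη).le hn hr hslope hPlip⟩

theorem stmt13_general (α : ℝ) (h1 : α ≤ 1) (K : ℝ) (hK : 0 < K)
    (N M : ℕ) (hN : 0 < N) (hM : 0 < M) :
    ∃ U : Set C(I01, ℝ), IsOpen U ∧ Dense U ∧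
      U ⊆ { f : C(I01, ℝ) | ∀ g : I01 → ℝ,
        (∀ x y : I01, |g x - g y| ≤ K * |x.1 - y.1| ^ α) →
        hContent (1 - α + 1 / N) (Subtype.val '' {x : I01 | f x = g x}) <
          1 / M } := by
  have hdα : 1 - α < 1 - α + 1 / N := lt_add_of_pos_right _ (by positivity)
  exact ⟨steepSet K α _ M, isOpen_steepSet K α _ M, dense_steepSet hK.le h1 hdα hM,
    fun _ hf _ hg => hContent_coincidence_lt_of_mem_steepSet hM hf hg⟩

/-- The set `D(N,M,K)` of continuous functions `f` such that
`ℋ^{1-α+1/N}_∞({f = g}) < 1/M` for every `g` Hölder of exponent `α` and constant `K`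
contains a dense open subset of `C[0,1]`. -/
theorem stmt13 (α : ℝ) (h0 : 0 < α) (h1 : α ≤ 1) (K : ℝ) (hK : 0 < K)
    (N M : ℕ) (hN : 0 < N) (hM : 0 < M) :
    ∃ U : Set C(I01, ℝ), IsOpen U ∧ Dense U ∧
      U ⊆ { f : C(I01, ℝ) | ∀ g : I01 → ℝ,
        (∀ x y : I01, |g x - g y| ≤ K * |x.1 - y.1| ^ α) →
        hContent (1 - α + 1 / N) (Subtype.val '' {x : I01 | f x = g x}) <
          1 / M } :=
  stmt13_general α h1 K hK N M hN hM
end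
end

section
/- Assume the Continuum Hypothesis and let 0 < d < n. If {B_α : α < ω₁} is the disjointified ω₁-enumeration of all Borel subsets of ℝⁿ of positive finite ℋ^d-measure (B_α = A_α \ ∪_{β<α} A_β), then uncountably many of the B_α have positive ℋ^d-measure. -/
/-!
If only countably many pieces `B_α` had positive measure, their union `N` would be Lebesgue-null,
since a set of finite `ℋ^d`-measure with `d < n` has zero `ℋ^n`-measure. By transfinite induction
every `A_α`, hence every Borel set of positive finite measure, lies in `N` up to an `ℋ^d`-null set.
Applied to all translates of one such set `S`, Fubini for `volume ⊗ ℋ^d|_S` then makes `N`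
Lebesgue-conull, a contradiction.
-/

open MeasureTheory Set

noncomputable section

/-- The ordinals below `ω₁`. -/
abbrev Omega1 : Type 1 := {o : Ordinal // o < (Cardinal.aleph 1).ord}

theorem Omega1.countable_Iio (α : Omega1) : (Iio α).Countable := by
  have : (Iio α.1).Countable := by
    rw [← Cardinal.le_aleph0_iff_set_countable, Cardinal.mk_Iio_ordinal, Cardinal.lift_le_aleph0]
    exact Cardinal.lt_aleph_one_iff.1 (Cardinal.lt_ord.1 α.2)
  exact this.preimage Subtype.val_injective

theorem measure_eq_zero_of_hausdorffMeasure_ne_top {E : Type*} [NormedAddCommGroup E]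
    [NormedSpace ℝ E] [FiniteDimensional ℝ E] [MeasurableSpace E] [BorelSpace E]
    (μ : Measure E) [IsFiniteMeasureOnCompacts μ] [μ.IsAddLeftInvariant]
    {d : ℝ} (hd : d < Module.finrank ℝ E) {s : Set E} (hs : μH[d] s ≠ ⊤) : μ s = 0 := by
  rw [μ.isAddLeftInvariant_eq_smul μH[Module.finrank ℝ E], Measure.smul_apply,
    (Measure.hausdorffMeasure_zero_or_top hd s).resolve_right hs, smul_zero]

section TransfiniteDisjointed

variable {X ι : Type*} [Preorder ι]

def transfiniteDisjointed (A : ι → Set X) (α : ι) : Set X := A α \ ⋃ (β) (_ : β < α), A β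

variable [MeasurableSpace X]

theorem MeasurableSet.transfiniteDisjointed (hIio : ∀ α : ι, (Iio α).Countable)
    {A : ι → Set X} (hA : ∀ α, MeasurableSet (A α)) (α : ι) :
    MeasurableSet (transfiniteDisjointed A α) :=
  (hA α).diff <| .biUnion (hIio α) fun β _ => hA β

theorem measure_diff_iUnion_transfiniteDisjointed_eq_zero [WellFoundedLT ι]
    (hIio : ∀ α : ι, (Iio α).Countable) (μ : Measure X) (A : ι → Set X) (α : ι) :
    μ (A α \ ⋃ (γ) (_ : 0 < μ (transfiniteDisjointed A γ)), transfiniteDisjointed A γ) = 0 := by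
  set N := ⋃ (γ) (_ : 0 < μ (transfiniteDisjointed A γ)), transfiniteDisjointed A γ
  induction α using WellFoundedLT.induction with
  | ind α ih =>
  have hsplit : A α \ N ⊆ (transfiniteDisjointed A α \ N) ∪ ⋃ (β) (_ : β < α), A β \ N := by
    rintro x ⟨hxα, hxN⟩
    by_cases hx : x ∈ ⋃ (β) (_ : β < α), A β
    · obtain ⟨β, hβ, hxβ⟩ := mem_iUnion₂.1 hx
      exact Or.inr <| mem_iUnion₂.2 ⟨β, hβ, hxβ, hxN⟩
    · exact Or.inl ⟨⟨hxα, hx⟩, hxN⟩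
  refine measure_mono_null hsplit <| measure_union_null ?_ <|
    (measure_biUnion_null_iff (hIio α)).2 ih
  rcases eq_zero_or_pos (μ (transfiniteDisjointed A α)) with h0 | hpos
  · exact measure_mono_null sdiff_subset h0
  · rw [sdiff_eq_empty.2 fun x hx => mem_iUnion₂.2 ⟨α, hpos, hx⟩, measure_empty]

end TransfiniteDisjointed

theorem measure_compl_eq_zero_of_ae_translates_subset {G : Type*} [MeasurableSpace G]
    [AddGroup G] [MeasurableAdd₂ G] [MeasurableNeg G]
    (ν μ : Measure G) [SFinite ν] [ν.IsAddLeftInvariant] [ν.IsNegInvariant]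
    [μ.IsAddRightInvariant] {N S : Set G} (hN : MeasurableSet N) (hS₀ : μ S ≠ 0)
    (hS : μ S ≠ ⊤) (h : ∀ v, μ ((· + v) ⁻¹' S \ N) = 0) : ν Nᶜ = 0 := by
  -- Compute `(ν ⊗ μ|_S) {(v, s) | s - v ∉ N}` slicing both ways.
  have : IsFiniteMeasure (μ.restrict S) :=
    ⟨by rwa [Measure.restrict_apply_univ, lt_top_iff_ne_top]⟩
  set E : Set (G × G) := {p | p.2 - p.1 ∈ Nᶜ}
  have hE : MeasurableSet E := hN.compl.preimage (measurable_snd.sub measurable_fst)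
  have h_slice (v : G) : μ.restrict S (Prod.mk v ⁻¹' E) = 0 := by
    have hmeas : MeasurableSet ((· - v) ⁻¹' Nᶜ) := hN.compl.preimage (measurable_sub_const v)
    change μ.restrict S ((· - v) ⁻¹' Nᶜ) = 0
    rw [Measure.restrict_apply hmeas, ← measure_preimage_add_right μ v, ← h v]
    congr 1
    ext x
    simp [and_comm]
  have h_fibre (s : G) : ν ((fun v => (v, s)) ⁻¹' E) = ν Nᶜ :=
    (Measure.measurePreserving_sub_left ν s).measure_preimage hN.compl.nullMeasurableSet
  have hprod : ν Nᶜ * μ S = 0 :=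
    calc ν Nᶜ * μ S = ∫⁻ s, ν ((fun v => (v, s)) ⁻¹' E) ∂μ.restrict S := by simp [h_fibre]
      _ = ν.prod (μ.restrict S) E := (Measure.prod_apply_symm hE).symm
      _ = ∫⁻ v, μ.restrict S (Prod.mk v ⁻¹' E) ∂ν := Measure.prod_apply hE
      _ = 0 := by simp [h_slice]
  exact (mul_eq_zero.1 hprod).resolve_right hS₀

theorem stmt16_general (n : ℕ) (d : ℝ) (hdn : d < n)
    (A : Omega1 → Set (EuclideanSpace ℝ (Fin n)))
    (hA : ∀ α, MeasurableSet (A α) ∧ 0 < μH[d] (A α) ∧ μH[d] (A α) < ⊤)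
    (hsurj : ∀ S : Set (EuclideanSpace ℝ (Fin n)),
      MeasurableSet S → 0 < μH[d] S → μH[d] S < ⊤ → ∃ α, A α = S) :
    ¬ ({α : Omega1 |
        0 < μH[d] (A α \ ⋃ (β : Omega1) (_ : β.1 < α.1), A β)}).Countable := by
  intro hcount
  change {α | 0 < μH[d] (transfiniteDisjointed A α)}.Countable at hcount
  set N := ⋃ (γ) (_ : 0 < μH[d] (transfiniteDisjointed A γ)), transfiniteDisjointed A γ
  have hdn' : d < Module.finrank ℝ (EuclideanSpace ℝ (Fin n)) := by simpa using hdn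
  have hN_null : volume N = 0 := (measure_biUnion_null_iff hcount).2 fun α _ =>
    measure_mono_null sdiff_subset <|
      measure_eq_zero_of_hausdorffMeasure_ne_top volume hdn' (hA α).2.2.ne
  have hN : MeasurableSet N :=
    .biUnion hcount fun α _ => .transfiniteDisjointed Omega1.countable_Iio (fun α => (hA α).1) α
  have hN_conull : volume Nᶜ = 0 := by
    obtain ⟨α₀⟩ : Nonempty Omega1 := ⟨⟨0, by simp [Ordinal.omega_pos]⟩⟩
    obtain ⟨hS, hS₀, hS_top⟩ := hA α₀
    refine measure_compl_eq_zero_of_ae_translates_subset volume μH[d] hN hS₀.ne' hS_top.ne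
      fun v => ?_
    have hμ := measure_preimage_add_right μH[d] v (A α₀)
    obtain ⟨α, hα⟩ := hsurj _ (hS.preimage (measurable_add_const v)) (hμ ▸ hS₀) (hμ ▸ hS_top)
    rw [← hα]
    exact measure_diff_iUnion_transfiniteDisjointed_eq_zero Omega1.countable_Iio _ A α
  refine NeZero.ne (volume : Measure (EuclideanSpace ℝ (Fin n)))
    (Measure.measure_univ_eq_zero.1 ?_)
  rw [← union_compl_self N]
  exact measure_union_null hN_null hN_conull

/-- Under CH, if `{A_α : α < ω₁}` enumerates all Borel sets of positive finite
`ℋ^d`-measure and `B_α = A_α \ ⋃_{β<α} A_β`, then uncountably many `B_α` have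
positive measure. -/
theorem stmt16 (n : ℕ) (d : ℝ) (hd : 0 < d) (hdn : d < n)
    (hCH : Cardinal.continuum = Cardinal.aleph 1)
    (A : Omega1 → Set (EuclideanSpace ℝ (Fin n)))
    (hA : ∀ α, MeasurableSet (A α) ∧ 0 < μH[d] (A α) ∧ μH[d] (A α) < ⊤)
    (hsurj : ∀ S : Set (EuclideanSpace ℝ (Fin n)),
      MeasurableSet S → 0 < μH[d] S → μH[d] S < ⊤ → ∃ α, A α = S) :
    ¬ ({α : Omega1 |
        0 < μH[d] (A α \ ⋃ (β : Omega1) (_ : β.1 < α.1), A β)}).Countable :=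
  stmt16_general n d hdn A hA hsurj
end
end
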